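/- Hybrid-policy inductive step: in a finite episodic MDP, let π be a β-approximate max-following policy over constituents {π^k}. Define for each C ∈ [H] the hybrid expected return J(C) = E[Σ_{h=0}^{C} R(s_h, π_h(s_h)) + Σ_{h=C+1}^{H−1} R(s_h, π^{t(s_C,C)}_h(s_h))], where t(s,C) is the constituent index that π follows at state s and time C. Then for every C < H−1, J(C+1) ≥ J(C) − β. -/
import Mathlib


/-- Time-indexed value function `V_h^π` in a finite episodic MDP. -/
noncomputable def val {S A : Type} [Fintype S] (R : S → A → ℝ) (P : S → A → S → ℝ)
    (H : ℕ) (π : ℕ → S → A) : ℕ → S → ℝ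
  | h, s =>
    if h < H then
      R s (π h s) + ∑ s' : S, P s (π h s) s' * val R P H π (h + 1) s'
    else 0
termination_by h _ => H - h
decreasing_by omega

/-- Occupancy measure: `occ μ0 P π h` is the distribution of the state at time `h`
along a trajectory of policy `π` started from `μ0`. -/
noncomputable def occ {S A : Type} [Fintype S] (μ0 : S → ℝ) (P : S → A → S → ℝ)
    (π : ℕ → S → A) : ℕ → S → ℝ
  | 0 => μ0
  | h + 1 => fun s' => ∑ s : S, occ μ0 P π h s * P s (π h s) s'


lemma occ_nonneg' {S A : Type} [Fintype S] (μ0 : S → ℝ) (P : S → A → S → ℝ)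
    (π : ℕ → S → A) (hμ0 : ∀ s, 0 ≤ μ0 s) (hP : ∀ s a s', 0 ≤ P s a s') :
    ∀ h s, 0 ≤ occ μ0 P π h s := by
  intro h
  induction h with
  | zero => exact hμ0
  | succ h ih =>
    intro s'
    show (0:ℝ) ≤ ∑ s : S, occ μ0 P π h s * P s (π h s) s'
    exact Finset.sum_nonneg fun s _ => mul_nonneg (ih s) (hP _ _ _)

lemma occ_sum' {S A : Type} [Fintype S] (μ0 : S → ℝ) (P : S → A → S → ℝ)
    (π : ℕ → S → A) (hμ0sum : ∑ s : S, μ0 s = 1)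
    (hPsum : ∀ s a, ∑ s' : S, P s a s' = 1) :
    ∀ h, ∑ s : S, occ μ0 P π h s = 1 := by
  intro h
  induction h with
  | zero => exact hμ0sum
  | succ h ih =>
    show ∑ s' : S, ∑ s : S, occ μ0 P π h s * P s (π h s) s' = 1
    rw [Finset.sum_comm]
    simp_rw [← Finset.mul_sum, hPsum, mul_one]
    exact ih

/-- hybrid-policy inductive step: let `π` be a `β`-approximate
max-following policy that at `(s,h)` copies constituent `t h s`, and let
`J(C) = E[Σ_{h=0}^{C} R(s_h, π_h(s_h)) + Σ_{h=C+1}^{H−1} R(s_h, π^{t(s_C,C)}_h(s_h))]`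
be the expected return of following `π` through time `C` and then the constituent
selected at `(s_C, C)` thereafter (the tail rewritten via the constituent's value
function at time `C+1`). Then `J(C+1) ≥ J(C) − β` for every `C` with `C+1 < H`. -/
theorem hybrid_inductive_step {S A : Type} [Fintype S]
    (R : S → A → ℝ) (P : S → A → S → ℝ) (μ0 : S → ℝ)
    (hR : ∀ s a, 0 ≤ R s a ∧ R s a ≤ 1)
    (hμ0 : ∀ s, 0 ≤ μ0 s) (hμ0sum : ∑ s : S, μ0 s = 1)
    (hPnonneg : ∀ s a s', 0 ≤ P s a s') (hPsum : ∀ s a, ∑ s' : S, P s a s' = 1)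
    (H K : ℕ) (πc : Fin K → ℕ → S → A) (β : ℝ) (hβ : 0 ≤ β)
    (π : ℕ → S → A) (t : ℕ → S → Fin K)
    (hmf : ∀ h, h < H → ∀ s, π h s = πc (t h s) h s ∧
      ∀ k : Fin K, val R P H (πc k) h s - β ≤ val R P H (πc (t h s)) h s)
    (J : ℕ → ℝ)
    (hJ : ∀ C,
      J C = (∑ h ∈ Finset.range (C + 1), ∑ s : S, occ μ0 P π h s * R s (π h s)) +
        ∑ s : S, occ μ0 P π C s *
          ∑ s' : S, P s (π C s) s' * val R P H (πc (t C s)) (C + 1) s') :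
    ∀ C, C + 1 < H → J (C + 1) ≥ J C - β := by
  intro C hC
  have hocc0 := occ_nonneg' μ0 P π hμ0 hPnonneg
  have hocc1 := occ_sum' μ0 P π hμ0sum hPsum
  have hval : ∀ s', R s' (π (C+1) s') +
      ∑ s'' : S, P s' (π (C+1) s') s'' * val R P H (πc (t (C+1) s')) (C+1+1) s''
      = val R P H (πc (t (C+1) s')) (C+1) s' := by
    intro s'
    rw [val, if_pos hC, (hmf (C+1) hC s').1]
  have occ_succ : ∀ s : S, occ μ0 P π (C+1) s
      = ∑ s0 : S, occ μ0 P π C s0 * P s0 (π C s0) s := fun s => rfl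
  have hJC := hJ C
  have hJC1 := hJ (C+1)
  rw [Finset.sum_range_succ] at hJC1
  -- combine the two tail sums in J(C+1)
  have combine : (∑ s : S, occ μ0 P π (C+1) s * R s (π (C+1) s)) +
      ∑ s : S, occ μ0 P π (C+1) s *
        ∑ s' : S, P s (π (C+1) s) s' * val R P H (πc (t (C+1) s)) (C+1+1) s'
      = ∑ s : S, occ μ0 P π (C+1) s * val R P H (πc (t (C+1) s)) (C+1) s := by
    rw [← Finset.sum_add_distrib]
    refine Finset.sum_congr rfl fun s _ => ?_
    rw [← mul_add, hval s]
  have key : (∑ s : S, occ μ0 P π C s *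
        ∑ s' : S, P s (π C s) s' * val R P H (πc (t C s)) (C+1) s') - β
      ≤ ∑ s : S, occ μ0 P π (C+1) s * val R P H (πc (t (C+1) s)) (C+1) s := by
    have hb : ∑ s0 : S, ∑ s : S, occ μ0 P π C s0 * (P s0 (π C s0) s * β) = β := by
      simp_rw [← Finset.mul_sum, ← Finset.sum_mul, hPsum, one_mul]
      rw [← Finset.sum_mul, hocc1 C, one_mul]
    have lhs_eq : (∑ s : S, occ μ0 P π C s *
          ∑ s' : S, P s (π C s) s' * val R P H (πc (t C s)) (C+1) s') - β
        = ∑ s0 : S, ∑ s : S, occ μ0 P π C s0 *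
            (P s0 (π C s0) s * (val R P H (πc (t C s0)) (C+1) s - β)) := by
      simp_rw [mul_sub, Finset.sum_sub_distrib]
      rw [hb]
      simp_rw [← Finset.mul_sum]
    have rhs_eq : ∑ s : S, occ μ0 P π (C+1) s * val R P H (πc (t (C+1) s)) (C+1) s
        = ∑ s0 : S, ∑ s : S, occ μ0 P π C s0 *
            (P s0 (π C s0) s * val R P H (πc (t (C+1) s)) (C+1) s) := by
      simp_rw [occ_succ, Finset.sum_mul, mul_assoc]
      exact Finset.sum_comm
    rw [lhs_eq, rhs_eq]
    refine Finset.sum_le_sum fun s0 _ => Finset.sum_le_sum fun s _ => ?_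
    refine mul_le_mul_of_nonneg_left (mul_le_mul_of_nonneg_left ?_ (hPnonneg _ _ _))
      (hocc0 C s0)
    exact sub_le_iff_le_add.mpr (by
      have := (hmf (C+1) hC s).2 (t C s0)
      linarith)
  rw [hJC1, hJC]
  have := combine
  linarith [key, combine]
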